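/- Let X be a subshift with left almost specification with constant mistake function g ≡ m, and let φ: X → Z be a factor map given by a sliding block code of radius r. Then Z = φ(X) has left almost specification with constant mistake function g ≡ 2r + m(2r+1). -/

import Mathlib

open Real Filter MeasureTheory

/-- The left shift map on bi-infinite sequences. -/
def shiftMap {A : Type*} (x : ℤ → A) : ℤ → A := fun i => x (i + 1)

/-- The word of length `n` read from `x` starting at position `i`. -/
def wordAt {A : Type*} (x : ℤ → A) (i : ℤ) (n : ℕ) : List A :=
  List.ofFn (fun k : Fin n => x (i + (k : ℕ)))

/-- A word `w` belongs to the language of a set `S` of bi-infinite sequences if it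
occurs somewhere in some point of `S`. -/
def InLangS {A : Type*} (S : Set (ℤ → A)) (w : List A) : Prop :=
  ∃ x ∈ S, ∃ i : ℤ, wordAt x i w.length = w

/-- Hamming distance between two words of the same length: the number of
positions at which they differ. -/
def listHamming {A : Type*} [DecidableEq A] (v w : List A) : ℕ :=
  (List.zipWith (fun a b => if a = b then 0 else 1) v w).sum

/-- A subshift: a closed, shift-invariant set of bi-infinite sequences over a
finite (discrete) alphabet. -/
structure Subshift (A : Type*) [TopologicalSpace A] where
  carrier : Set (ℤ → A)
  isClosed : IsClosed carrier
  invariant : ∀ x ∈ carrier, shiftMap x ∈ carrier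

/-- Topological entropy of (the language of) `S`, as the infimum of
`(1/n) log |L_n(S)|` (equal to the limit by subadditivity). -/
noncomputable def langEntropy {A : Type*} (S : Set (ℤ → A)) : ℝ :=
  ⨅ n : ℕ+, Real.log ({w : List A | w.length = (n : ℕ) ∧ InLangS S w}.ncard) / (n : ℝ)

/-- The factor of `X` under the sliding block code of radius `r` with block map `Φ`. -/
def factorImage {A B : Type*} [TopologicalSpace A]
    (X : Subshift A) (r : ℕ) (Φ : (Fin (2 * r + 1) → A) → B) : Set (ℤ → B) :=
  (fun x : ℤ → A => fun i : ℤ =>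
    Φ (fun k : Fin (2 * r + 1) => x (i - (r : ℤ) + (k : ℕ)))) '' X.carrier

/-!
Let `u₁` and `u₂` be the blocks, longer by `r` symbols on each side, whose images are `w₁` and
`w₂`. Left almost specification of `X` glues `u₂` after a perturbation, with at most `m` mistakes,
of `u₁` shifted `2r` places to the left. In the image of the glued point, `w₂` is then preceded by
a word of length `|w₁|` which differs from `w₁` in at most `2r + 1` symbols per mistake and in its
last `2r` symbols, whose windows reach across the seam.
-/

open Finset

def slidingCode {A B : Type*} (r : ℕ) (Φ : (Fin (2 * r + 1) → A) → B) (x : ℤ → A) : ℤ → B :=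
  fun i => Φ (fun k : Fin (2 * r + 1) => x (i - r + (k : ℕ)))

def LeftAlmostSpec {A : Type*} [DecidableEq A] (S : Set (ℤ → A)) (g : ℕ) : Prop :=
  ∀ w1 w2 : List A, InLangS S w1 → InLangS S w2 →
    ∃ b : List A, b.length = w1.length ∧ InLangS S b ∧ listHamming b w1 ≤ g ∧ InLangS S (b ++ w2)

section Words

variable {A : Type*}

@[simp]
lemma length_wordAt (x : ℤ → A) (i : ℤ) (n : ℕ) : (wordAt x i n).length = n :=
  List.length_ofFn

lemma wordAt_add (x : ℤ → A) (i : ℤ) (m n : ℕ) :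
    wordAt x i (m + n) = wordAt x i m ++ wordAt x (i + m) n := by
  simp [wordAt, List.ofFn_add, add_assoc]

lemma wordAt_eq_append {x : ℤ → A} {i : ℤ} {u v : List A}
    (h : wordAt x i (u ++ v).length = u ++ v) :
    wordAt x i u.length = u ∧ wordAt x (i + u.length) v.length = v := by
  rw [List.length_append, wordAt_add] at h
  exact List.append_inj h (length_wordAt ..)

lemma wordAt_eq_wordAt_iff {x y : ℤ → A} {a b : ℤ} {n : ℕ} :
    wordAt x a n = wordAt y b n ↔ ∀ k < n, x (a + k) = y (b + k) := by
  simp only [wordAt, List.ofFn_inj, funext_iff, Fin.forall_iff]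

variable [DecidableEq A]

lemma listHamming_append {u u' v v' : List A} (h : u.length = v.length) :
    listHamming (u ++ u') (v ++ v') = listHamming u v + listHamming u' v' := by
  simp [listHamming, List.zipWith_append h]

lemma listHamming_wordAt (x y : ℤ → A) (a b : ℤ) (n : ℕ) :
    listHamming (wordAt x a n) (wordAt y b n) =
      #{k ∈ range n | x (a + ((k : ℕ) : ℤ)) ≠ y (b + ((k : ℕ) : ℤ))} := by
  induction n with
  | zero => rfl
  | succ n ih =>
    rw [wordAt_add, wordAt_add, listHamming_append (by simp), ih, range_add_one, filter_insert,
      apply_ite card]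
    by_cases h : x (a + n) = y (b + n) <;> simp [listHamming, wordAt, h, add_comm]

lemma listHamming_wordAt_le (x y : ℤ → A) (a b : ℤ) (n : ℕ) :
    listHamming (wordAt x a n) (wordAt y b n) ≤ n := by
  rw [listHamming_wordAt]
  exact (card_filter_le _ _).trans (card_range n).le

lemma listHamming_wordAt_add_le (x y : ℤ → A) (a b : ℤ) {d k n : ℕ} (h : d + k ≤ n) :
    listHamming (wordAt x (a + d) k) (wordAt y (b + d) k) ≤
      listHamming (wordAt x a n) (wordAt y b n) := by
  rw [listHamming_wordAt, listHamming_wordAt]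
  refine card_le_card_of_injOn (· + d : ℕ → ℕ) (fun t ht => ?_)
    (fun s _ t _ => Nat.add_right_cancel)
  simp only [coe_filter, mem_range, Set.mem_ofPred_eq] at ht ⊢
  refine ⟨by omega, ?_⟩
  push_cast
  simpa only [add_comm (t : ℤ), add_assoc] using ht.2

end Words

section SlidingCode

variable {A B : Type*} (r : ℕ) (Φ : (Fin (2 * r + 1) → A) → B)

lemma wordAt_slidingCode_eq {x y : ℤ → A} {a b : ℤ} {n : ℕ}
    (h : wordAt x a (n + 2 * r) = wordAt y b (n + 2 * r)) :
    wordAt (slidingCode r Φ x) (a + r) n = wordAt (slidingCode r Φ y) (b + r) n := by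
  rw [wordAt_eq_wordAt_iff] at h ⊢
  intro t ht
  simp only [slidingCode]
  congr 1
  funext k
  convert h (t + k) (by omega) using 2 <;> push_cast <;> ring

variable [DecidableEq A] [DecidableEq B]

lemma listHamming_wordAt_slidingCode_le (x y : ℤ → A) (a b : ℤ) (n : ℕ) :
    listHamming (wordAt (slidingCode r Φ x) (a + r) n) (wordAt (slidingCode r Φ y) (b + r) n) ≤
      listHamming (wordAt x a (n + 2 * r)) (wordAt y b (n + 2 * r)) * (2 * r + 1) := by
  rw [listHamming_wordAt, listHamming_wordAt]
  refine (card_le_card fun t ht => ?_).trans <| card_biUnion_le_card_mul _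
    (fun p => (range (2 * r + 1)).image (p - ·)) _ fun p _ => card_image_le.trans (card_range _).le
  simp only [mem_filter, mem_range] at ht
  obtain ⟨k, hk⟩ : ∃ k : Fin (2 * r + 1), x (a + (t + k : ℕ)) ≠ y (b + (t + k : ℕ)) := by
    by_contra! h
    apply ht.2
    simp only [slidingCode]
    congr 1
    funext k
    convert h k using 2 <;> push_cast <;> ring
  simp only [mem_biUnion, mem_image, mem_filter, mem_range]
  exact ⟨t + k, ⟨by omega, hk⟩, k, k.2, by omega⟩

variable {r Φ}

lemma LeftAlmostSpec.exists_slidingCode_glue {S : Set (ℤ → A)} {m : ℕ} (hS : LeftAlmostSpec S m)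
    {x y : ℤ → A} (hx : x ∈ S) (hy : y ∈ S) (i₁ i₂ : ℤ) (n₁ n₂ : ℕ) :
    ∃ z ∈ S, ∃ j : ℤ,
      listHamming (wordAt (slidingCode r Φ z) j n₁) (wordAt (slidingCode r Φ x) i₁ n₁) ≤
        2 * r + m * (2 * r + 1) ∧
      wordAt (slidingCode r Φ z) (j + n₁) n₂ = wordAt (slidingCode r Φ y) i₂ n₂ := by
  obtain ⟨u, hu, -, hum, z, hz, j, hzj⟩ :=
    hS (wordAt x (i₁ - 3 * r) (n₁ + 2 * r)) (wordAt y (i₂ - r) (n₂ + 2 * r))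
      ⟨x, hx, _, by rw [length_wordAt]⟩ ⟨y, hy, _, by rw [length_wordAt]⟩
  obtain ⟨hzu, hzy⟩ := wordAt_eq_append hzj
  simp only [hu, length_wordAt] at hzu hzy
  refine ⟨z, hz, j + 3 * r, ?_, ?_⟩
  · rcases le_or_gt n₁ (2 * r) with hn | hn
    · exact (listHamming_wordAt_le ..).trans (by omega)
    obtain ⟨n, rfl⟩ : ∃ n, n₁ = n + 2 * r := ⟨n₁ - 2 * r, by omega⟩
    rw [wordAt_add, wordAt_add, listHamming_append (by simp)]
    have hhead : listHamming (wordAt (slidingCode r Φ z) (j + 3 * r) n)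
        (wordAt (slidingCode r Φ x) i₁ n) ≤ m * (2 * r + 1) := calc
      _ ≤ listHamming (wordAt z (j + (2 * r : ℕ)) (n + 2 * r))
            (wordAt x (i₁ - 3 * r + (2 * r : ℕ)) (n + 2 * r)) * (2 * r + 1) := by
        convert listHamming_wordAt_slidingCode_le r Φ z x (j + (2 * r : ℕ))
          (i₁ - 3 * r + (2 * r : ℕ)) n using 3 <;> push_cast <;> ring
      _ ≤ m * (2 * r + 1) := by
        gcongr
        rw [← hzu] at hum
        exact (listHamming_wordAt_add_le _ _ _ _ (by omega)).trans hum
    have htail := listHamming_wordAt_le (slidingCode r Φ z) (slidingCode r Φ x)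
      (j + 3 * r + n) (i₁ + n) (2 * r)
    omega
  · convert wordAt_slidingCode_eq r Φ hzy using 2 <;> push_cast <;> ring

theorem LeftAlmostSpec.image_slidingCode {S : Set (ℤ → A)} {m : ℕ} (hS : LeftAlmostSpec S m) :
    LeftAlmostSpec (slidingCode r Φ '' S) (2 * r + m * (2 * r + 1)) := by
  rintro w₁ w₂ ⟨_, ⟨x, hx, rfl⟩, i₁, hw₁⟩ ⟨_, ⟨y, hy, rfl⟩, i₂, hw₂⟩
  obtain ⟨z, hz, j, hmistakes, hglue⟩ :=
    hS.exists_slidingCode_glue (Φ := Φ) hx hy i₁ i₂ w₁.length w₂.length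
  refine ⟨wordAt (slidingCode r Φ z) j w₁.length, length_wordAt .., ⟨_, ⟨z, hz, rfl⟩, j, by simp⟩,
    by rwa [hw₁] at hmistakes, ⟨_, ⟨z, hz, rfl⟩, j, ?_⟩⟩
  rw [List.length_append, length_wordAt, wordAt_add, hglue, hw₂]

end SlidingCode

theorem stmt14_general {A B : Type*} [DecidableEq A] [DecidableEq B]
    [TopologicalSpace A]
    (X : Subshift A) (m r : ℕ) (Φ : (Fin (2 * r + 1) → A) → B)
    (hX : ∀ w1 w2 : List A, InLangS X.carrier w1 → InLangS X.carrier w2 →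
      ∃ b : List A, b.length = w1.length ∧ InLangS X.carrier b ∧
        listHamming b w1 ≤ m ∧ InLangS X.carrier (b ++ w2)) :
    ∀ w1 w2 : List B,
      InLangS (factorImage X r Φ) w1 → InLangS (factorImage X r Φ) w2 →
      ∃ b : List B, b.length = w1.length ∧ InLangS (factorImage X r Φ) b ∧
        listHamming b w1 ≤ 2 * r + m * (2 * r + 1) ∧
        InLangS (factorImage X r Φ) (b ++ w2) :=
  LeftAlmostSpec.image_slidingCode (r := r) (Φ := Φ) hX

/-- If `X` has LAS with `g ≡ m` and `φ` is a factor map given by a sliding block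
code of radius `r`, then `φ(X)` has LAS with `g ≡ 2r + m(2r+1)`. -/
theorem stmt14 {A B : Type*} [Fintype A] [DecidableEq A] [Fintype B] [DecidableEq B]
    [TopologicalSpace A] [DiscreteTopology A]
    (X : Subshift A) (m r : ℕ) (Φ : (Fin (2 * r + 1) → A) → B)
    (hX : ∀ w1 w2 : List A, InLangS X.carrier w1 → InLangS X.carrier w2 →
      ∃ b : List A, b.length = w1.length ∧ InLangS X.carrier b ∧
        listHamming b w1 ≤ m ∧ InLangS X.carrier (b ++ w2)) :
    ∀ w1 w2 : List B,
      InLangS (factorImage X r Φ) w1 → InLangS (factorImage X r Φ) w2 →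
      ∃ b : List B, b.length = w1.length ∧ InLangS (factorImage X r Φ) b ∧
        listHamming b w1 ≤ 2 * r + m * (2 * r + 1) ∧
        InLangS (factorImage X r Φ) (b ++ w2) :=
  stmt14_general X m r Φ hX
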